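/- Let d ≥ 2 and let C be a Hermitian matrix on ℂ^d⊗ℂ^d with eigenvalues λ1 ≥ … ≥ λ_{d²} satisfying λ_n = λ_{n+1} = … = λ_{d²−4+n} for some n ∈ {1,2,3,4}. Then λ(tr_1[C]) ⊕ λ(tr_2[C]) ≺ λ(tr_1[Λ]) ⊕ λ(tr_2[Λ]), where Λ is the diagonal matrix on ℂ^d⊗ℂ^d with diagonal (λ1, …, λ_{d²}) in decreasing order (with respect to the lexicographic index ordering). -/

import Mathlib

open Matrix Finset Kronecker
open scoped ComplexOrder

/-- The first partial trace of a matrix on `ℂ^{d1} ⊗ ℂ^{d2}` (index pairs `(i,s)` ordered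
lexicographically): `(tr_1 C)_{s,t} = ∑_i C_{(i,s),(i,t)}`. -/
noncomputable def ptrace1 {d1 d2 : ℕ} (C : Matrix (Fin d1 × Fin d2) (Fin d1 × Fin d2) ℂ) :
    Matrix (Fin d2) (Fin d2) ℂ :=
  Matrix.of fun s t => ∑ i : Fin d1, C (i, s) (i, t)

/-- The second partial trace: `(tr_2 C)_{i,j} = ∑_s C_{(i,s),(j,s)}`. -/
noncomputable def ptrace2 {d1 d2 : ℕ} (C : Matrix (Fin d1 × Fin d2) (Fin d1 × Fin d2) ℂ) :
    Matrix (Fin d1) (Fin d1) ℂ :=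
  Matrix.of fun i j => ∑ s : Fin d2, C (i, s) (j, s)

/-- The sum of the `k` largest entries of the vector `x` (the largest value of a sum of `k`
entries of `x`), i.e. `∑_{i=1}^k x_i^↓`. -/
noncomputable def maxSum {ι : Type*} [Fintype ι] (x : ι → ℝ) (k : ℕ) : ℝ :=
  sSup {s : ℝ | ∃ A : Finset ι, A.card = k ∧ s = ∑ i ∈ A, x i}

/-- `x ≺ y` (majorization): for every `k`, the sum of the `k` largest entries of `x` is at
most the sum of the `k` largest entries of `y`, and the total sums are equal. -/
def Majorizes {ι κ : Type*} [Fintype ι] [Fintype κ] (x : ι → ℝ) (y : κ → ℝ) : Prop :=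
  (∀ k : ℕ, maxSum x k ≤ maxSum y k) ∧ ∑ i, x i = ∑ j, y j

/-- `x ≺_w y` (weak majorization). -/
def WeakMajorizes {ι κ : Type*} [Fintype ι] [Fintype κ] (x : ι → ℝ) (y : κ → ℝ) : Prop :=
  ∀ k : ℕ, maxSum x k ≤ maxSum y k


/-!
Let `P`, `Q` be the spectral projections of `tr_1 C`, `tr_2 C` onto the eigenvectors indexed by
`S₁`, `S₂`, and `kᵢ = #Sᵢ`. Since `1 ⊗ P + Q ⊗ 1 = Q ⊗ P + (1 - (1 - Q) ⊗ (1 - P))`, the sum of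
the selected eigenvalues of the partial traces is `tr((Q ⊗ P) C) + tr((1 - (1 - Q) ⊗ (1 - P)) C)`.
Both operators are projections, of ranks `k₁ k₂` and `d² - (d - k₁)(d - k₂)`, so by Ky Fan's
principle the sum is at most the sum of the `k₁ k₂` largest eigenvalues of `C` plus the sum of its
`d² - (d - k₁)(d - k₂)` largest ones.

It remains to bound these two top sums of the sorted eigenvalues, arranged row by row in a
`d × d` array, by `m` column sums plus `t` row sums with `m + t = k₁ + k₂`. After subtracting the
plateau value the entries are nonnegative before the plateau and nonpositive after it, and at most
three of them lie off it. A top sum is then largest at any length on the plateau; choosing the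
rows and columns to end there, they pick up all the positive entries and only negative entries
that the top sums also contain. For `d = 2` the bound is an identity.
-/

section Majorization

variable {ι κ : Type*} [Fintype ι] [Fintype κ]

theorem bddAbove_sums (x : ι → ℝ) (k : ℕ) :
    BddAbove {s : ℝ | ∃ A : Finset ι, #A = k ∧ s = ∑ i ∈ A, x i} :=
  (Set.finite_range fun A : Finset ι ↦ ∑ i ∈ A, x i).subset
    (by rintro _ ⟨A, -, rfl⟩; exact ⟨A, rfl⟩) |>.bddAbove

theorem sum_le_maxSum (x : ι → ℝ) (A : Finset ι) : ∑ i ∈ A, x i ≤ maxSum x #A :=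
  le_csSup (bddAbove_sums x #A) ⟨A, rfl, rfl⟩

theorem maxSum_of_card_lt (x : ι → ℝ) {k : ℕ} (hk : Fintype.card ι < k) : maxSum x k = 0 := by
  rw [maxSum, ← Real.sSup_empty]
  congr 1
  refine Set.eq_empty_of_forall_notMem ?_
  rintro _ ⟨A, rfl, -⟩
  exact hk.not_ge (card_le_univ A)

theorem weakMajorizes_of_forall_exists {x : ι → ℝ} {y : κ → ℝ}
    (hcard : Fintype.card ι = Fintype.card κ)
    (h : ∀ A : Finset ι, ∃ B : Finset κ, #B = #A ∧ ∑ i ∈ A, x i ≤ ∑ j ∈ B, y j) :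
    WeakMajorizes x y := by
  intro k
  rcases le_or_gt k (Fintype.card ι) with hk | hk
  · obtain ⟨A₀, -, hA₀⟩ := exists_subset_card_eq (s := (univ : Finset ι)) (by simpa using hk)
    refine csSup_le ⟨_, A₀, hA₀, rfl⟩ ?_
    rintro _ ⟨A, rfl, rfl⟩
    obtain ⟨B, hB, hAB⟩ := h A
    exact hAB.trans (hB ▸ sum_le_maxSum y B)
  · rw [maxSum_of_card_lt x hk, maxSum_of_card_lt y (hcard ▸ hk)]

end Majorization

theorem Fin.sum_filter_val_lt {M : Type*} [AddCommMonoid M] {n m : ℕ} (h : m ≤ n) (f : ℕ → M) :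
    ∑ i ∈ univ.filter (fun i : Fin n ↦ (i : ℕ) < m), f i = ∑ x ∈ range m, f x := by
  rw [sum_filter, Fin.sum_univ_eq_sum_range (fun x ↦ if x < m then f x else 0), ← sum_filter]
  congr 1
  ext x
  simp only [mem_filter, mem_range]
  omega

theorem weakMajorizes_sumElim {d : ℕ} {x₁ x₂ : Fin d → ℝ} {a b : ℕ → ℝ}
    (h : ∀ S₁ S₂ : Finset (Fin d), ∃ m t, m ≤ d ∧ t ≤ d ∧ m + t = #S₁ + #S₂ ∧
      ∑ s ∈ S₁, x₁ s + ∑ j ∈ S₂, x₂ j ≤ ∑ s ∈ range m, a s + ∑ j ∈ range t, b j) :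
    WeakMajorizes (Sum.elim x₁ x₂) (Sum.elim (fun s : Fin d ↦ a s) (fun j : Fin d ↦ b j)) := by
  refine weakMajorizes_of_forall_exists (by simp) fun A ↦ ?_
  obtain ⟨m, t, hm, ht, hmt, hle⟩ := h A.toLeft A.toRight
  refine ⟨(univ.filter fun s : Fin d ↦ (s : ℕ) < m).disjSum
    (univ.filter fun j : Fin d ↦ (j : ℕ) < t), ?_, ?_⟩
  · rw [card_disjSum, Fin.card_filter_val_lt, Fin.card_filter_val_lt, min_eq_right hm,
      min_eq_right ht, hmt, card_toLeft_add_card_toRight]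
  · rw [← toLeft_disjSum_toRight (u := A), sum_disjSum, sum_disjSum]
    simpa only [Sum.elim_inl, Sum.elim_inr, Fin.sum_filter_val_lt hm, Fin.sum_filter_val_lt ht]
      using hle

theorem sum_mul_le_sum_range {N t : ℕ} {F : ℕ → ℝ} (hF : AntitoneOn F (Set.Iio N))
    {s : Fin N → ℝ} (hs₀ : ∀ i, 0 ≤ s i) (hs₁ : ∀ i, s i ≤ 1) (hs : ∑ i, s i = t) :
    ∑ i : Fin N, F i * s i ≤ ∑ x ∈ range t, F x := by
  have htN : t ≤ N := by
    have : (t : ℝ) ≤ N := hs ▸ (sum_le_sum fun i _ ↦ hs₁ i).trans (by simp)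
    exact_mod_cast this
  set ind : Fin N → ℝ := fun i ↦ if (i : ℕ) < t then 1 else 0
  have hind : ∑ i, ind i = t := by
    simp [ind, sum_boole, Fin.card_filter_val_lt, htN]
  have hFind : ∑ i : Fin N, F i * ind i = ∑ x ∈ range t, F x := by
    simp only [ind, mul_ite, mul_one, mul_zero, ← sum_filter]
    exact Fin.sum_filter_val_lt htN F
  -- `F (t - 1)` lies between the values of `F` below `t` and those from `t` on.
  have hsep : ∀ i : Fin N, (F i - F (t - 1)) * (s i - ind i) ≤ 0 := by
    intro i
    have hi : (i : ℕ) ∈ Set.Iio N := i.isLt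
    by_cases hit : (i : ℕ) < t
    · simp only [ind, if_pos hit]
      exact mul_nonpos_of_nonneg_of_nonpos
        (sub_nonneg.2 (hF hi (Set.mem_Iio.2 (by omega)) (by omega))) (by linarith [hs₁ i])
    · simp only [ind, if_neg hit, sub_zero]
      exact mul_nonpos_of_nonpos_of_nonneg
        (sub_nonpos.2 (hF (Set.mem_Iio.2 (by omega)) hi (by omega))) (hs₀ i)
  calc ∑ i : Fin N, F i * s i
      = ∑ i : Fin N, F i * ind i + ∑ i : Fin N, (F i - F (t - 1)) * (s i - ind i)
          + F (t - 1) * (∑ i, s i - ∑ i, ind i) := by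
        simp only [sub_mul, mul_sub, sum_sub_distrib, mul_sum]
        ring
    _ ≤ ∑ x ∈ range t, F x := by
        rw [hFind, hs, hind, sub_self, mul_zero, add_zero]
        linarith [sum_nonpos fun i (_ : i ∈ univ) ↦ hsep i]

namespace Matrix

variable {m : Type*} [Fintype m]

theorem IsStarProjection.posSemidef {P : Matrix m m ℂ} (hP : IsStarProjection P) :
    P.PosSemidef := by
  simpa [← star_eq_conjTranspose, hP.isSelfAdjoint.star_eq, hP.isIdempotentElem.eq] using
    posSemidef_conjTranspose_mul_self P

theorem IsStarProjection.kronecker {n : Type*} [Fintype n] {P : Matrix m m ℂ}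
    {Q : Matrix n n ℂ} (hP : IsStarProjection P) (hQ : IsStarProjection Q) :
    IsStarProjection (P ⊗ₖ Q) where
  isIdempotentElem := by
    rw [IsIdempotentElem, ← mul_kronecker_mul, hP.isIdempotentElem.eq, hQ.isIdempotentElem.eq]
  isSelfAdjoint := by
    rw [IsSelfAdjoint, star_eq_conjTranspose, conjTranspose_kronecker, ← star_eq_conjTranspose,
      ← star_eq_conjTranspose, hP.isSelfAdjoint.star_eq, hQ.isSelfAdjoint.star_eq]

variable [DecidableEq m]

theorem trace_conjStarAlgAut (U : unitary (Matrix m m ℂ)) (X : Matrix m m ℂ) :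
    (Unitary.conjStarAlgAut ℂ _ U X).trace = X.trace := by
  rw [Unitary.conjStarAlgAut_apply, trace_mul_cycle, Unitary.coe_star_mul_self, one_mul]

namespace IsHermitian

variable {A : Matrix m m ℂ}

theorem sum_eigenvalues (hA : A.IsHermitian) : ∑ i, hA.eigenvalues i = A.trace.re := by
  simp [hA.trace_eq_sum_eigenvalues]

theorem re_trace_mul_le_sum_range {C R : Matrix m m ℂ} (hC : C.IsHermitian)
    {N : ℕ} {F : ℕ → ℝ} (hF : AntitoneOn F (Set.Iio N)) (e : Fin N ≃ m)
    (he : ∀ k : Fin N, F k = hC.eigenvalues (e k)) (hR₀ : R.PosSemidef)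
    (hR₁ : (1 - R).PosSemidef) {t : ℕ} (ht : R.trace = t) :
    (R * C).trace.re ≤ ∑ x ∈ range t, F x := by
  set U : Matrix m m ℂ := (hC.eigenvectorUnitary : Matrix m m ℂ)
  have hUU : Uᴴ * U = 1 := Unitary.coe_star_mul_self _
  have hUU' : U * Uᴴ = 1 := Unitary.coe_mul_star_self _
  set S := Uᴴ * R * U
  have hS₀ : S.PosSemidef := hR₀.conjTranspose_mul_mul_same U
  have hS₁ : (1 - S).PosSemidef := by
    simpa [S, mul_sub, sub_mul, hUU] using hR₁.conjTranspose_mul_mul_same U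
  set D : Matrix m m ℂ := diagonal (RCLike.ofReal ∘ hC.eigenvalues)
  have htr : (R * C).trace = ∑ ρ, S ρ ρ * hC.eigenvalues ρ := by
    have hSD : (R * C).trace = (S * D).trace := by
      rw [show C = U * D * Uᴴ from hC.spectral_theorem, ← mul_assoc, ← mul_assoc,
        trace_mul_comm]
      simp only [S, mul_assoc]
    rw [hSD]
    simp [D, trace, mul_diagonal]
  have hsum : ∑ ρ, (S ρ ρ).re = t := by
    rw [← Complex.re_sum]
    change S.trace.re = t
    rw [trace_mul_cycle, hUU', one_mul, ht, Complex.natCast_re]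
  calc (R * C).trace.re = ∑ k : Fin N, F k * (S (e k) (e k)).re := by
        rw [htr, Complex.re_sum, ← e.sum_comp]
        simp [he, mul_comm]
    _ ≤ ∑ x ∈ range t, F x := by
        refine sum_mul_le_sum_range hF (fun k ↦ ?_) (fun k ↦ ?_) ?_
        · exact (Complex.le_def.mp hS₀.diag_nonneg).1
        · simpa using (Complex.le_def.mp hS₁.diag_nonneg).1
        · rw [e.sum_comp (fun ρ ↦ (S ρ ρ).re), hsum]

noncomputable def eigenProj (hA : A.IsHermitian) (T : Finset m) : Matrix m m ℂ :=
  Unitary.conjStarAlgAut ℂ _ hA.eigenvectorUnitary (diagonal fun j ↦ if j ∈ T then 1 else 0)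

theorem isStarProjection_eigenProj (hA : A.IsHermitian) (T : Finset m) :
    IsStarProjection (hA.eigenProj T) := by
  refine IsStarProjection.map ⟨?_, ?_⟩ _
  · rw [IsIdempotentElem, diagonal_mul_diagonal]
    congr 1
    ext j
    split_ifs <;> simp
  · rw [IsSelfAdjoint, star_eq_conjTranspose, diagonal_conjTranspose]
    congr 1
    ext j
    split_ifs <;> simp_all

theorem trace_eigenProj (hA : A.IsHermitian) (T : Finset m) :
    (hA.eigenProj T).trace = #T := by
  rw [eigenProj, trace_conjStarAlgAut, trace_diagonal]
  simp

theorem trace_eigenProj_mul (hA : A.IsHermitian) (T : Finset m) :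
    (hA.eigenProj T * A).trace = ∑ j ∈ T, (hA.eigenvalues j : ℂ) := by
  nth_rw 2 [hA.spectral_theorem]
  rw [eigenProj, ← map_mul, trace_conjStarAlgAut, diagonal_mul_diagonal, trace_diagonal]
  simp [sum_ite_mem]

end IsHermitian

end Matrix

section PartialTrace

variable {d₁ d₂ : ℕ}

theorem trace_ptrace1 (C : Matrix (Fin d₁ × Fin d₂) (Fin d₁ × Fin d₂) ℂ) :
    (ptrace1 C).trace = C.trace := by
  simp only [trace, Matrix.diag, ptrace1, of_apply, Fintype.sum_prod_type]
  exact sum_comm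

theorem trace_ptrace2 (C : Matrix (Fin d₁ × Fin d₂) (Fin d₁ × Fin d₂) ℂ) :
    (ptrace2 C).trace = C.trace := by
  simp only [trace, Matrix.diag, ptrace2, of_apply, Fintype.sum_prod_type]

theorem trace_one_kronecker_mul (P : Matrix (Fin d₂) (Fin d₂) ℂ)
    (C : Matrix (Fin d₁ × Fin d₂) (Fin d₁ × Fin d₂) ℂ) :
    ((1 ⊗ₖ P) * C).trace = (P * ptrace1 C).trace := by
  simp only [trace, diag_apply, mul_apply, kroneckerMap_apply, one_apply, ite_mul, one_mul,
    zero_mul, Fintype.sum_prod_type, sum_ite_irrel, sum_const_zero, sum_ite_eq, mem_univ,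
    ↓reduceIte, ptrace1, of_apply, mul_sum]
  rw [sum_comm]
  exact sum_congr rfl fun _ _ ↦ sum_comm

theorem trace_kronecker_one_mul (Q : Matrix (Fin d₁) (Fin d₁) ℂ)
    (C : Matrix (Fin d₁ × Fin d₂) (Fin d₁ × Fin d₂) ℂ) :
    ((Q ⊗ₖ 1) * C).trace = (Q * ptrace2 C).trace := by
  simp only [trace, diag_apply, mul_apply, kroneckerMap_apply, one_apply, mul_ite, mul_one,
    mul_zero, ite_mul, zero_mul, Fintype.sum_prod_type, sum_ite_eq, mem_univ, ↓reduceIte,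
    ptrace2, of_apply, mul_sum]
  exact sum_congr rfl fun _ _ ↦ sum_comm

theorem one_sub_one_sub_kronecker_one_sub {m n : Type*} [DecidableEq m] [DecidableEq n]
    (Q : Matrix m m ℂ) (P : Matrix n n ℂ) :
    1 - (1 - Q) ⊗ₖ (1 - P) = 1 ⊗ₖ P + Q ⊗ₖ 1 - Q ⊗ₖ P := by
  ext ⟨i, s⟩ ⟨j, t⟩
  by_cases hij : i = j <;> by_cases hst : s = t <;>
    simp only [Matrix.sub_apply, Matrix.add_apply, kroneckerMap_apply, one_apply, Prod.mk.injEq,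
      hij, hst, and_self, and_true, and_false, ↓reduceIte] <;> ring

theorem sum_eigenvalues_ptrace_le (C : Matrix (Fin d₁ × Fin d₂) (Fin d₁ × Fin d₂) ℂ)
    (hC : C.IsHermitian) (h₁ : (ptrace1 C).IsHermitian) (h₂ : (ptrace2 C).IsHermitian)
    {F : ℕ → ℝ} (hF : AntitoneOn F (Set.Iio (d₁ * d₂))) (e : Fin (d₁ * d₂) ≃ Fin d₁ × Fin d₂)
    (he : ∀ k : Fin (d₁ * d₂), F k = hC.eigenvalues (e k)) (S₁ : Finset (Fin d₂))
    (S₂ : Finset (Fin d₁)) :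
    ∑ s ∈ S₁, h₁.eigenvalues s + ∑ i ∈ S₂, h₂.eigenvalues i ≤
      ∑ x ∈ range (#S₂ * #S₁), F x + ∑ x ∈ range (d₁ * d₂ - (d₁ - #S₂) * (d₂ - #S₁)), F x := by
  set P := h₁.eigenProj S₁
  set Q := h₂.eigenProj S₂
  have hP := h₁.isStarProjection_eigenProj S₁
  have hQ := h₂.isStarProjection_eigenProj S₂
  have hR := hQ.kronecker hP
  have hR' := (hQ.one_sub.kronecker hP.one_sub).one_sub
  have hS₁ : #S₁ ≤ d₂ := by simpa using card_le_univ S₁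
  have hS₂ : #S₂ ≤ d₁ := by simpa using card_le_univ S₂
  have htr : (Q ⊗ₖ P).trace = ((#S₂ * #S₁ : ℕ) : ℂ) := by
    rw [trace_kronecker, h₂.trace_eigenProj, h₁.trace_eigenProj, Nat.cast_mul]
  have htr' : (1 - (1 - Q) ⊗ₖ (1 - P)).trace =
      ((d₁ * d₂ - (d₁ - #S₂) * (d₂ - #S₁) : ℕ) : ℂ) := by
    rw [trace_sub, trace_kronecker, trace_sub, trace_sub, trace_one, trace_one, trace_one,
      h₂.trace_eigenProj, h₁.trace_eigenProj]
    push_cast [Nat.cast_sub (Nat.mul_le_mul (Nat.sub_le d₁ #S₂) (Nat.sub_le d₂ #S₁)),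
      Nat.cast_sub hS₁, Nat.cast_sub hS₂]
    simp
  have hsplit : ∑ s ∈ S₁, h₁.eigenvalues s + ∑ i ∈ S₂, h₂.eigenvalues i =
      ((Q ⊗ₖ P) * C).trace.re + ((1 - (1 - Q) ⊗ₖ (1 - P)) * C).trace.re := by
    rw [← Complex.add_re, ← trace_add, ← add_mul, one_sub_one_sub_kronecker_one_sub,
      add_sub_cancel, add_mul, trace_add, trace_one_kronecker_mul, trace_kronecker_one_mul,
      h₁.trace_eigenProj_mul, h₂.trace_eigenProj_mul]
    simp
  rw [hsplit]
  exact add_le_add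
    (hC.re_trace_mul_le_sum_range hF e he hR.posSemidef hR.one_sub.posSemidef htr)
    (hC.re_trace_mul_le_sum_range hF e he hR'.posSemidef hR'.one_sub.posSemidef htr')

end PartialTrace

/-- `F` read as a `d × d` array in row-major order, entry `(i, s)` being `F (s + d * i)`. For the
sorted eigenvalues of `C` these are the diagonals of `tr_1 Λ` and `tr_2 Λ`. -/
def colSum (d : ℕ) (F : ℕ → ℝ) (s : ℕ) : ℝ := ∑ i ∈ range d, F (s + d * i)

def rowSum (d : ℕ) (F : ℕ → ℝ) (j : ℕ) : ℝ := ∑ s ∈ range d, F (s + d * j)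

theorem sum_range_rowSum (d : ℕ) (F : ℕ → ℝ) (t : ℕ) :
    ∑ j ∈ range t, rowSum d F j = ∑ x ∈ range (d * t), F x := by
  induction t with
  | zero => simp
  | succ t ih =>
    rw [sum_range_succ, ih, Nat.mul_succ, sum_range_add, rowSum]
    simp only [add_comm]

theorem sum_range_colSum (d : ℕ) (F : ℕ → ℝ) :
    ∑ s ∈ range d, colSum d F s = ∑ x ∈ range (d * d), F x := by
  simp only [colSum]
  rw [sum_comm]
  exact sum_range_rowSum d F d

theorem Nat.mul_lt_add_of_add_le_three {a b : ℕ} (h₀ : 0 < a + b) (h₃ : a + b ≤ 3) :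
    a * b < a + b := by
  have : a ≤ 3 := by omega
  interval_cases a <;> omega

section SignPattern

variable {G : ℕ → ℝ} {N p q : ℕ}

theorem sum_range_le_of_nonneg (hpos : ∀ x, x + q < N → 0 ≤ G x) {r r' : ℕ} (h : r ≤ r')
    (hr' : r' + q ≤ N) : ∑ x ∈ range r, G x ≤ ∑ x ∈ range r', G x :=
  sum_le_sum_of_subset_of_nonneg (range_mono h) fun x hx _ ↦
    hpos x (by have := mem_range.1 hx; omega)

theorem sum_range_le_of_nonpos (hneg : ∀ x, p ≤ x → x < N → G x ≤ 0) {r r' : ℕ} (hp : p ≤ r')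
    (h : r' ≤ r) (hr : r ≤ N) : ∑ x ∈ range r, G x ≤ ∑ x ∈ range r', G x := by
  rw [← sum_range_add_sum_Ico G h, add_le_iff_nonpos_right]
  exact sum_nonpos fun x hx ↦ hneg x (hp.trans (mem_Ico.1 hx).1) (by have := mem_Ico.1 hx; omega)

theorem sum_range_le_of_plateau (hpos : ∀ x, x + q < N → 0 ≤ G x)
    (hneg : ∀ x, p ≤ x → x < N → G x ≤ 0) {r r' : ℕ} (hr : r ≤ N) (hp : p ≤ r')
    (hr' : r' + q ≤ N) : ∑ x ∈ range r, G x ≤ ∑ x ∈ range r', G x := by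
  rcases le_total r r' with h | h
  · exact sum_range_le_of_nonneg hpos h hr'
  · exact sum_range_le_of_nonpos hneg hp h hr

theorem add_le_colSum {d s : ℕ} (hd : 2 ≤ d) (hs : s < d)
    (hpos : ∀ x, x < d * (d - 1) → 0 ≤ G x) : G s + G (d * (d - 1) + s) ≤ colSum d G s := by
  obtain ⟨e, rfl⟩ : ∃ e, d = e + 2 := ⟨d - 2, by omega⟩
  rw [show e + 2 - 1 = e + 1 from rfl] at hpos ⊢
  rw [colSum, sum_range_succ, sum_range_succ', mul_zero, add_zero, add_comm s]
  have hmid : 0 ≤ ∑ i ∈ range e, G (s + (e + 2) * (i + 1)) :=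
    sum_nonneg fun i hi ↦ hpos _ (by have := mem_range.1 hi; nlinarith)
  linarith

theorem sum_range_add_le_sum_colSum {d m : ℕ} (hd : 2 ≤ d) (hm : m ≤ d)
    (hpos : ∀ x, x < d * (d - 1) → 0 ≤ G x) :
    ∑ x ∈ range m, G x + ∑ s ∈ range m, G (d * (d - 1) + s) ≤ ∑ s ∈ range m, colSum d G s := by
  rw [← sum_add_distrib]
  exact sum_le_sum fun s hs ↦ add_le_colSum hd (by have := mem_range.1 hs; omega) hpos

theorem exists_le_colSum_add_rowSum_of_three_le {d : ℕ} (hd : 3 ≤ d) (hpq : p + q ≤ 3)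
    (hpos : ∀ x, x + q < d * d → 0 ≤ G x) (hneg : ∀ x, p ≤ x → x < d * d → G x ≤ 0)
    {k₁ k₂ : ℕ} (hk₁ : k₁ ≤ d) (hk₂ : k₂ ≤ d) :
    ∃ m t, m ≤ d ∧ t ≤ d ∧ m + t = k₁ + k₂ ∧
      ∑ x ∈ range (k₁ * k₂), G x + ∑ x ∈ range (d * d - (d - k₁) * (d - k₂)), G x ≤
        ∑ s ∈ range m, colSum d G s + ∑ j ∈ range t, rowSum d G j := by
  have hdd : d * (d - 1) + d = d * d := by
    rw [Nat.mul_sub_one, Nat.sub_add_cancel (Nat.le_mul_self d)]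
  have hd3 : 3 * d ≤ d * d := Nat.mul_le_mul_right d hd
  have hu : k₁ * k₂ ≤ d * d := Nat.mul_le_mul hk₁ hk₂
  have hcols (m : ℕ) (hm : m ≤ d) :=
    sum_range_add_le_sum_colSum (by omega) hm fun x hx ↦ hpos x (by omega)
  rcases Nat.eq_zero_or_pos (k₁ + k₂) with hk | hk
  · obtain ⟨rfl, rfl⟩ : k₁ = 0 ∧ k₂ = 0 := by omega
    exact ⟨0, 0, by simp⟩
  rcases Nat.eq_zero_or_pos ((d - k₁) + (d - k₂)) with hk' | hk'
  · obtain ⟨h₁, h₂⟩ : k₁ = d ∧ k₂ = d := by omega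
    refine ⟨d, d, le_rfl, le_rfl, by omega, ?_⟩
    simp [h₁, h₂, sum_range_colSum, sum_range_rowSum]
  have hl := Nat.mul_le_mul (Nat.sub_le d k₁) (Nat.sub_le d k₂)
  rcases le_or_gt ((d - k₁) + (d - k₂)) q with hk'q | hqk'
  · -- All rows but the last, and enough columns to reach the negative entries the top sums take.
    have hA' := Nat.mul_lt_add_of_add_le_three hk' (by omega)
    set m := d + 1 - ((d - k₁) + (d - k₂))
    refine ⟨m, d - 1, by omega, by omega, by omega, ?_⟩
    calc _ ≤ ∑ x ∈ range m, G x + ∑ x ∈ range (d * (d - 1) + m), G x :=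
          add_le_add (sum_range_le_of_plateau hpos hneg hu (by omega) (by omega))
            (sum_range_le_of_nonpos hneg (by omega) (by omega) (by omega))
      _ = ∑ x ∈ range m, G x + ∑ s ∈ range m, G (d * (d - 1) + s) +
            ∑ j ∈ range (d - 1), rowSum d G j := by
          rw [sum_range_rowSum, sum_range_add]
          ring
      _ ≤ _ := add_le_add_left (hcols m (by omega)) _
  · -- At least one row, and columns only up to `d - q`, which avoids the negative entries.
    set t := max 1 (k₁ + k₂ - (d - q))
    set m := k₁ + k₂ - t
    refine ⟨m, t, by omega, by omega, by omega, ?_⟩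
    have hdt : d ≤ d * t := Nat.le_mul_of_pos_right d (by omega)
    have hdt' : d * t ≤ d * (d - 1) := Nat.mul_le_mul_left d (by omega)
    have htail : 0 ≤ ∑ s ∈ range m, G (d * (d - 1) + s) :=
      sum_nonneg fun s hs ↦ hpos _ (by have := mem_range.1 hs; omega)
    have hum : ∑ x ∈ range (k₁ * k₂), G x ≤ ∑ x ∈ range m, G x := by
      by_cases hpm : p ≤ m
      · exact sum_range_le_of_plateau hpos hneg hu hpm (by omega)
      · have := Nat.mul_lt_add_of_add_le_three hk (by omega)
        exact sum_range_le_of_nonneg hpos (by omega) (by omega)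
    have hvt : ∑ x ∈ range (d * d - (d - k₁) * (d - k₂)), G x ≤ ∑ x ∈ range (d * t), G x :=
      sum_range_le_of_plateau hpos hneg (by omega) (by omega) (by omega)
    rw [sum_range_rowSum]
    linarith [hcols m (by omega)]

end SignPattern

theorem exists_eq_colSum_add_rowSum_of_two (G : ℕ → ℝ) {k₁ k₂ : ℕ} (hk₁ : k₁ ≤ 2)
    (hk₂ : k₂ ≤ 2) :
    ∃ m t, m ≤ 2 ∧ t ≤ 2 ∧ m + t = k₁ + k₂ ∧
      ∑ x ∈ range (k₁ * k₂), G x + ∑ x ∈ range (2 * 2 - (2 - k₁) * (2 - k₂)), G x =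
        ∑ s ∈ range m, colSum 2 G s + ∑ j ∈ range t, rowSum 2 G j := by
  interval_cases k₁ <;> interval_cases k₂
  · exact ⟨0, 0, by simp⟩
  · exact ⟨0, 1, by simp [rowSum]⟩
  · exact ⟨0, 2, by simp [rowSum, sum_range_succ, add_assoc]⟩
  · exact ⟨0, 1, by simp [rowSum]⟩
  · exact ⟨1, 1, by simp [colSum, rowSum, sum_range_succ, add_assoc, add_comm, add_left_comm]⟩
  · exact ⟨2, 1, by simp [colSum, rowSum, sum_range_succ, add_assoc, add_comm, add_left_comm]⟩
  · exact ⟨0, 2, by simp [rowSum, sum_range_succ, add_assoc]⟩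
  · exact ⟨2, 1, by simp [colSum, rowSum, sum_range_succ, add_assoc, add_comm, add_left_comm]⟩
  · exact ⟨2, 2, by simp [colSum, rowSum, sum_range_succ, add_assoc, add_comm, add_left_comm]⟩

theorem exists_le_colSum_add_rowSum {d p q : ℕ} (hd : 2 ≤ d) (hpq : p + q ≤ 3) {F : ℕ → ℝ}
    (hF : AntitoneOn F (Set.Iio (d * d))) (hends : F p = F (d * d - 1 - q))
    {k₁ k₂ : ℕ} (hk₁ : k₁ ≤ d) (hk₂ : k₂ ≤ d) :
    ∃ m t, m ≤ d ∧ t ≤ d ∧ m + t = k₁ + k₂ ∧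
      ∑ x ∈ range (k₁ * k₂), F x + ∑ x ∈ range (d * d - (d - k₁) * (d - k₂)), F x ≤
        ∑ s ∈ range m, colSum d F s + ∑ j ∈ range t, rowSum d F j := by
  have hN : 4 ≤ d * d := Nat.mul_le_mul hd hd
  set G := fun x ↦ F x - F p
  obtain ⟨m, t, hm, ht, hmt, hG⟩ : ∃ m t, m ≤ d ∧ t ≤ d ∧ m + t = k₁ + k₂ ∧
      ∑ x ∈ range (k₁ * k₂), G x + ∑ x ∈ range (d * d - (d - k₁) * (d - k₂)), G x ≤
        ∑ s ∈ range m, colSum d G s + ∑ j ∈ range t, rowSum d G j := by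
    rcases hd.eq_or_lt with rfl | hd
    · obtain ⟨m, t, hm, ht, hmt, hG⟩ := exists_eq_colSum_add_rowSum_of_two G hk₁ hk₂
      exact ⟨m, t, hm, ht, hmt, hG.le⟩
    · refine exists_le_colSum_add_rowSum_of_three_le hd hpq (fun x hx ↦ ?_)
        (fun x hp hx ↦ ?_) hk₁ hk₂
      · rw [sub_nonneg, hends]
        exact hF (Set.mem_Iio.2 (by omega)) (Set.mem_Iio.2 (by omega)) (by omega)
      · exact sub_nonpos.2 (hF (Set.mem_Iio.2 (by omega)) (Set.mem_Iio.2 hx) hp)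
  refine ⟨m, t, hm, ht, hmt, ?_⟩
  have hcount : (k₁ * k₂ : ℕ) + ((d * d - (d - k₁) * (d - k₂) : ℕ) : ℝ) = d * m + d * t := by
    have : (k₁ : ℝ) + k₂ = m + t := by exact_mod_cast hmt.symm
    push_cast [Nat.cast_sub (Nat.mul_le_mul (Nat.sub_le d k₁) (Nat.sub_le d k₂)),
      Nat.cast_sub hk₁, Nat.cast_sub hk₂]
    linear_combination (d : ℝ) * this
  simp only [G, colSum, rowSum, sum_sub_distrib, sum_const, card_range, nsmul_eq_mul] at hG
  simp only [colSum, rowSum]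
  linarith [congrArg (· * F p) hcount]

theorem majorizes_eigenvalues_ptrace {d p q : ℕ} (hd : 2 ≤ d) (hpq : p + q ≤ 3)
    (C : Matrix (Fin d × Fin d) (Fin d × Fin d) ℂ) (hC : C.IsHermitian)
    (h₁ : (ptrace1 C).IsHermitian) (h₂ : (ptrace2 C).IsHermitian) {F : ℕ → ℝ}
    (hF : AntitoneOn F (Set.Iio (d * d))) (e : Fin (d * d) ≃ Fin d × Fin d)
    (he : ∀ k : Fin (d * d), F k = hC.eigenvalues (e k)) (hends : F p = F (d * d - 1 - q)) :
    Majorizes (Sum.elim h₁.eigenvalues h₂.eigenvalues)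
      (Sum.elim (fun s : Fin d ↦ colSum d F s) (fun j : Fin d ↦ rowSum d F j)) := by
  refine ⟨weakMajorizes_sumElim fun S₁ S₂ ↦ ?_, ?_⟩
  · obtain ⟨m, t, hm, ht, hmt, hle⟩ := exists_le_colSum_add_rowSum hd hpq hF hends
      (by simpa using card_le_univ S₂) (by simpa using card_le_univ S₁)
    exact ⟨m, t, hm, ht, by omega, (sum_eigenvalues_ptrace_le C hC h₁ h₂ hF e he S₁ S₂).trans hle⟩
  · have htrace : ∑ x ∈ range (d * d), F x = C.trace.re := by
      rw [← Fin.sum_univ_eq_sum_range, ← hC.sum_eigenvalues, ← e.sum_comp]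
      exact sum_congr rfl fun k _ ↦ he k
    rw [Fintype.sum_sum_type, Fintype.sum_sum_type]
    simp only [Sum.elim_inl, Sum.elim_inr, h₁.sum_eigenvalues, h₂.sum_eigenvalues, trace_ptrace1,
      trace_ptrace2]
    rw [Fin.sum_univ_eq_sum_range (colSum d F), Fin.sum_univ_eq_sum_range (rowSum d F),
      sum_range_colSum, sum_range_rowSum, htrace]

theorem sufficient_conditions_square_case (d : ℕ) (hd : 2 ≤ d)
    (C : Matrix (Fin d × Fin d) (Fin d × Fin d) ℂ) (hC : C.IsHermitian)
    (htr1 : (ptrace1 C).IsHermitian) (htr2 : (ptrace2 C).IsHermitian)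
    -- `μ` lists the eigenvalues of `C` in decreasing order
    (μ : Fin (d * d) → ℝ) (hμ : Antitone μ)
    (g : Fin (d * d) ≃ Fin d × Fin d) (hg : ∀ k, μ k = hC.eigenvalues (g k))
    -- `λ_n = … = λ_{d²-4+n}` for some `n ∈ {1,2,3,4}` (`μ` is 0-indexed)
    (hn : ∃ n : ℕ, 1 ≤ n ∧ n ≤ 4 ∧
      ∀ i j : Fin (d * d), n - 1 ≤ (i : ℕ) → (i : ℕ) ≤ d * d - 4 + n - 1 →
        n - 1 ≤ (j : ℕ) → (j : ℕ) ≤ d * d - 4 + n - 1 → μ i = μ j) :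
    Majorizes (Sum.elim htr1.eigenvalues htr2.eigenvalues)
      (Sum.elim (fun s : Fin d => ∑ i : Fin d, μ (finProdFinEquiv (i, s)))
                (fun j : Fin d => ∑ s : Fin d, μ (finProdFinEquiv (j, s)))) := by
  obtain ⟨n, hn₁, hn₄, hflat⟩ := hn
  have hN : 4 ≤ d * d := Nat.mul_le_mul hd hd
  set F : ℕ → ℝ := fun x ↦ if h : x < d * d then μ ⟨x, h⟩ else 0
  have hFμ : ∀ k : Fin (d * d), F k = μ k := fun k ↦ dif_pos k.isLt
  have hF : AntitoneOn F (Set.Iio (d * d)) := fun x hx y hy hxy ↦ by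
    simp only [F, dif_pos (Set.mem_Iio.1 hx), dif_pos (Set.mem_Iio.1 hy)]
    exact hμ hxy
  have hends : F (n - 1) = F (d * d - 1 - (4 - n)) := by
    rw [hFμ ⟨n - 1, by omega⟩, hFμ ⟨d * d - 1 - (4 - n), by omega⟩]
    exact hflat _ _ le_rfl (by dsimp only; omega) (by dsimp only; omega) (by dsimp only; omega)
  have hcol : (fun s : Fin d ↦ ∑ i : Fin d, μ (finProdFinEquiv (i, s))) =
      fun s : Fin d ↦ colSum d F s := funext fun s ↦ by
    simp [colSum, ← Fin.sum_univ_eq_sum_range, ← hFμ]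
  have hrow : (fun j : Fin d ↦ ∑ s : Fin d, μ (finProdFinEquiv (j, s))) =
      fun j : Fin d ↦ rowSum d F j := funext fun j ↦ by
    simp [rowSum, ← Fin.sum_univ_eq_sum_range (fun s ↦ F (s + d * j)), ← hFμ]
  rw [hcol, hrow]
  exact majorizes_eigenvalues_ptrace hd (by omega) C hC htr1 htr2 hF g (fun k ↦ hFμ k ▸ hg k)
    hends
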